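/- Let q = (0, 15175619/33313280, 15175619/33313280, 0, 0, 0, 0, 1481021/16656640) and let r* = r(9/11, 9/11) = (4/121, 18/121, 18/121, 81/121). Then the profile (p₁, p₂, q) = (9/11, 9/11, q) is a Nash equilibrium of the three-person zero-sum game determined by A and B: (i) for every p₁ ∈ [0,1], r(p₁, 9/11)·A·q = r*·A·q; (ii) for every p₂ ∈ [0,1], r(9/11, p₂)·B·q = r*·B·q; and (iii) for every column index j ∈ {1,…,8}, r*·(A+B)·q ≤ (r*ᵀ(A+B))ⱼ, i.e., q minimizes the Players' combined expected payoff, so q maximizes Banker's payoff −(1/2)·r*·(A+B)·q. -/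

import Mathlib

open Matrix

/-- The product mixture `((1−p₁)(1−p₂), (1−p₁)p₂, p₁(1−p₂), p₁p₂)` in `ℝ⁴`. -/
noncomputable def prodMix (p₁ p₂ : ℝ) : Fin 4 → ℝ :=
  ![(1 - p₁) * (1 - p₂), (1 - p₁) * p₂, p₁ * (1 - p₂), p₁ * p₂]

/-- Player 1's payoff matrix against Banker at θ = 1/2. -/
noncomputable def matA : Matrix (Fin 4) (Fin 8) ℝ :=
  (-(16 / 13 ^ 9 : ℝ)) •
    !![5774122, 5774122, 4995370, 4995370, 4605994, 4605994, 3827242, 3827242;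
       6359098, 6359098, 5580346, 5580346, 5580346, 5580346, 4801594, 4801594;
       5127763, 5127763, 5300819, 5300819, 5387347, 5387347, 5560403, 5560403;
       5756515, 5756515, 5929571, 5929571, 5929571, 5929571, 6102627, 6102627]

/-- Player 2's payoff matrix against Banker at θ = 1/2. -/
noncomputable def matB : Matrix (Fin 4) (Fin 8) ℝ :=
  (-(16 / 13 ^ 9 : ℝ)) •
    !![5774122, 4995370, 5774122, 4995370, 4605994, 3827242, 4605994, 3827242;
       5127763, 5300819, 5127763, 5300819, 5387347, 5560403, 5387347, 5560403;
       6359098, 5580346, 6359098, 5580346, 5580346, 4801594, 5580346, 4801594;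
       5756515, 5929571, 5756515, 5929571, 5929571, 6102627, 5929571, 6102627]

/-! Each Player's payoff is affine in his own mixing probability, so indifference at
`9/11` only has to be checked between his two pure strategies: a finite rational computation.
For Banker, the mixture `r*` makes every column of `A + B` equally good, since `r*ᵀ(A + B)` is a
constant vector; hence any probability vector `q`, in particular the given one, is a best reply,
and (iii) even holds with equality. -/

theorem dotProduct_mulVec_eq_of_vecMul_eq_const {R n m : Type*} [CommSemiring R]
    [Fintype n] [Fintype m] (r : n → R) (M : Matrix n m R) (q : m → R) {c : R}
    (hM : vecMul r M = fun _ => c) (hq : ∑ j, q j = 1) : r ⬝ᵥ M *ᵥ q = c := by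
  rw [dotProduct_mulVec, hM, dotProduct, ← Finset.mul_sum, hq, mul_one]

theorem prodMix_eq_left (p₁ p₂ : ℝ) :
    prodMix p₁ p₂ = (1 - p₁) • prodMix 0 p₂ + p₁ • prodMix 1 p₂ := by
  ext i; fin_cases i <;> simp [prodMix]

theorem prodMix_eq_right (p₁ p₂ : ℝ) :
    prodMix p₁ p₂ = (1 - p₂) • prodMix p₁ 0 + p₂ • prodMix p₁ 1 := by
  ext i; fin_cases i <;> simp [prodMix] <;> ring

theorem dotProduct_prodMix_left_eq {p₂ : ℝ} {v : Fin 4 → ℝ}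
    (h : prodMix 0 p₂ ⬝ᵥ v = prodMix 1 p₂ ⬝ᵥ v) (p₁ p₁' : ℝ) :
    prodMix p₁ p₂ ⬝ᵥ v = prodMix p₁' p₂ ⬝ᵥ v := by
  rw [prodMix_eq_left p₁, prodMix_eq_left p₁']
  simp only [add_dotProduct, smul_dotProduct, h, smul_eq_mul]
  ring

theorem dotProduct_prodMix_right_eq {p₁ : ℝ} {v : Fin 4 → ℝ}
    (h : prodMix p₁ 0 ⬝ᵥ v = prodMix p₁ 1 ⬝ᵥ v) (p₂ p₂' : ℝ) :
    prodMix p₁ p₂ ⬝ᵥ v = prodMix p₁ p₂' ⬝ᵥ v := by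
  rw [prodMix_eq_right p₁ p₂, prodMix_eq_right p₁ p₂']
  simp only [add_dotProduct, smul_dotProduct, h, smul_eq_mul]
  ring

noncomputable def qStar : Fin 8 → ℝ :=
  ![0, 15175619 / 33313280, 15175619 / 33313280, 0, 0, 0, 0, 1481021 / 16656640]

noncomputable def rStar : Fin 4 → ℝ := ![4 / 121, 18 / 121, 18 / 121, 81 / 121]

theorem rStar_eq_prodMix : rStar = prodMix (9 / 11) (9 / 11) := by
  ext i; fin_cases i <;> simp [rStar, prodMix] <;> norm_num

theorem sum_qStar : ∑ j, qStar j = 1 := by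
  simp [qStar, Fin.sum_univ_succ]; norm_num

theorem prodMix_dotProduct_matA_mulVec_qStar :
    prodMix 0 (9 / 11) ⬝ᵥ matA *ᵥ qStar = prodMix 1 (9 / 11) ⬝ᵥ matA *ᵥ qStar := by
  simp [prodMix, matA, qStar, dotProduct, mulVec, Fin.sum_univ_succ]; norm_num

theorem prodMix_dotProduct_matB_mulVec_qStar :
    prodMix (9 / 11) 0 ⬝ᵥ matB *ᵥ qStar = prodMix (9 / 11) 1 ⬝ᵥ matB *ᵥ qStar := by
  simp [prodMix, matB, qStar, dotProduct, mulVec, Fin.sum_univ_succ]; norm_num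

theorem vecMul_rStar_matA_add_matB :
    vecMul rStar (matA + matB) = fun _ => -(16 / 13 ^ 9) * (1392275402 / 121) := by
  ext j
  fin_cases j <;> simp [rStar, matA, matB, vecMul, dotProduct, Fin.sum_univ_succ] <;> norm_num

/-- The profile `(9/11, 9/11, q)` is a Nash equilibrium: each Player is
indifferent given the others' strategies, and `q` minimizes the Players'
combined expected payoff over Banker's pure strategies. -/
theorem nash_equilibrium_profile :
    let q : Fin 8 → ℝ :=
      ![0, 15175619 / 33313280, 15175619 / 33313280, 0, 0, 0, 0,
        1481021 / 16656640]
    let rstar : Fin 4 → ℝ := ![4 / 121, 18 / 121, 18 / 121, 81 / 121]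
    (∀ p₁ ∈ Set.Icc (0 : ℝ) 1,
        prodMix p₁ (9 / 11) ⬝ᵥ matA.mulVec q = rstar ⬝ᵥ matA.mulVec q) ∧
      (∀ p₂ ∈ Set.Icc (0 : ℝ) 1,
        prodMix (9 / 11) p₂ ⬝ᵥ matB.mulVec q = rstar ⬝ᵥ matB.mulVec q) ∧
      (∀ j : Fin 8,
        rstar ⬝ᵥ (matA + matB).mulVec q ≤ Matrix.vecMul rstar (matA + matB) j) := by
  intro q rstar
  have hr : rstar = prodMix (9 / 11) (9 / 11) := rStar_eq_prodMix
  have hc : vecMul rstar (matA + matB) = _ := vecMul_rStar_matA_add_matB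
  refine ⟨fun p₁ _ => ?_, fun p₂ _ => ?_, fun j => ?_⟩
  · rw [hr]
    exact dotProduct_prodMix_left_eq prodMix_dotProduct_matA_mulVec_qStar p₁ (9 / 11)
  · rw [hr]
    exact dotProduct_prodMix_right_eq prodMix_dotProduct_matB_mulVec_qStar p₂ (9 / 11)
  · rw [dotProduct_mulVec_eq_of_vecMul_eq_const rstar _ q hc sum_qStar, hc]
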